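/- For the sets C₁ = co{(−2,2,1), (−2,2,−1)}, C₂ = co{(2,2,1), (2,2,−1)} and the solid cylinder D = {(x,y,z) ∈ ℝ³ : x² + y² ≤ 1, |z| ≤ 1}, the set of least-squares solutions argmin_{u∈ℝ³} (d(u,C₁)² + d(u,C₂)² + d(u,D)²) equals the vertical segment {(0, 5/3, z) : |z| ≤ 1}. -/

import Mathlib

noncomputable section
open Real Filter

/-- ℝ³ with the Euclidean structure. -/
abbrev E3 : Type := EuclideanSpace ℝ (Fin 3)
/-- ℝ² with the Euclidean structure. -/
abbrev E2 : Type := EuclideanSpace ℝ (Fin 2)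

/-- The real inner product. -/
def ip {E : Type} [NormedAddCommGroup E] [InnerProductSpace ℝ E] (x y : E) : ℝ :=
  inner ℝ x y

/-- `w` is the metric projection of `u` onto `C`, characterised by membership
together with the variational inequality `⟪v - w, u - w⟫ ≤ 0` for all `v ∈ C`. -/
def IsProj {E : Type} [NormedAddCommGroup E] [InnerProductSpace ℝ E]
    (C : Set E) (u w : E) : Prop :=
  w ∈ C ∧ ∀ v ∈ C, inner ℝ (v - w) (u - w) ≤ (0 : ℝ)

/-- `(u₁,u₂,u₃)` is an ε-cycle for `(C₁,C₂,C₃)` with support `(w₁,w₂,w₃)`. -/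
def IsCycleWithSupport {E : Type} [NormedAddCommGroup E] [InnerProductSpace ℝ E]
    (C₁ C₂ C₃ : Set E) (ε : ℝ) (u₁ u₂ u₃ w₁ w₂ w₃ : E) : Prop :=
  IsProj C₁ u₃ w₁ ∧ IsProj C₂ u₁ w₂ ∧ IsProj C₃ u₂ w₃ ∧
    u₁ = u₃ + ε • (w₁ - u₃) ∧ u₂ = u₁ + ε • (w₂ - u₁) ∧ u₃ = u₂ + ε • (w₃ - u₂)

/-- `(u₁,u₂,u₃)` is an ε-cycle for `(C₁,C₂,C₃)`. -/
def IsCycle {E : Type} [NormedAddCommGroup E] [InnerProductSpace ℝ E]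
    (C₁ C₂ C₃ : Set E) (ε : ℝ) (u₁ u₂ u₃ : E) : Prop :=
  ∃ w₁ w₂ w₃ : E, IsCycleWithSupport C₁ C₂ C₃ ε u₁ u₂ u₃ w₁ w₂ w₃

/-- An admissible sequence: strictly increasing (on indices `k ≥ 1`), starting
at `t₁ = π/4` and converging to `π/2`. -/
def Admissible (t : ℕ → ℝ) : Prop :=
  StrictMonoOn t (Set.Ici 1) ∧ t 1 = π / 4 ∧ Tendsto t atTop (nhds (π / 2))

/-- The segment C₁ = co{(−2,2,1), (−2,2,−1)}. -/
def C1 : Set E3 := convexHull ℝ {WithLp.toLp 2 ![(-2 : ℝ), 2, 1], WithLp.toLp 2 ![(-2 : ℝ), 2, -1]}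

/-- The segment C₂ = co{(2,2,1), (2,2,−1)}. -/
def C2 : Set E3 := convexHull ℝ {WithLp.toLp 2 ![(2 : ℝ), 2, 1], WithLp.toLp 2 ![(2 : ℝ), 2, -1]}

/-- The points pₖ = (cos tₖ, sin tₖ, (−1)ᵏ). -/
def pSeq (t : ℕ → ℝ) (k : ℕ) : E3 := WithLp.toLp 2 ![Real.cos (t k), Real.sin (t k), (-1 : ℝ) ^ k]

/-- C₃ = closed convex hull of {pₖ : k ≥ 1}. -/
def C3 (t : ℕ → ℝ) : Set E3 := closure (convexHull ℝ (pSeq t '' {k | 1 ≤ k}))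

/-- a = (−2,2). -/
def aPt : E2 := WithLp.toLp 2 ![(-2 : ℝ), 2]
/-- b = (2,2). -/
def bPt : E2 := WithLp.toLp 2 ![(2 : ℝ), 2]
/-- vₖ = (cos tₖ, sin tₖ). -/
def vSeq (t : ℕ → ℝ) (k : ℕ) : E2 := WithLp.toLp 2 ![Real.cos (t k), Real.sin (t k)]
/-- C₁' = {a}. -/
def C1' : Set E2 := {aPt}
/-- C₂' = {b}. -/
def C2' : Set E2 := {bPt}
/-- C₃' = closed convex hull of {vₖ : k ≥ 1}. -/
def C3' (t : ℕ → ℝ) : Set E2 := closure (convexHull ℝ (vSeq t '' {k | 1 ≤ k}))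

/-- Projection of ℝ³ onto the xy-plane. -/
def projXY (x : E3) : E2 := WithLp.toLp 2 ![x 0, x 1]

/-- Lifting a point of the xy-plane to height `z`. -/
def liftZ (p : E2) (z : ℝ) : E3 := WithLp.toLp 2 ![p 0, p 1, z]

/-- The solid cylinder D. -/
def Dcyl : Set E3 := {x | x 0 ^ 2 + x 1 ^ 2 ≤ 1 ∧ |x 2| ≤ 1}

/-!
Write `e(z) = max 0 (|z| - 1)` for the distance from `z` to `[-1, 1]`. Since the two segments sit
at `(∓2, 2)` and `D` lies in the half-space `y ≤ 1`, for every `u = (x, y, z)`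
  `d(u,C₁)² + d(u,C₂)² + d(u,D)² ≥ 2x² + 8 + 2(y - 2)² + max(0, y - 1)² + 3 e(z)²`
  `                              ≥ 26/3 + 2x² + (y - 5/3)² + 3 e(z)²`,
while on the segment `{(0, 5/3, z) : |z| ≤ 1}` the three nearest points `(∓2, 2, z)`, `(0, 1, z)`
give the value `37/9 + 37/9 + 4/9 = 26/3`. So `26/3` is the minimum and it is attained exactly on
that segment.
-/

open Metric

theorem setOf_forall_le_eq_of_min {α β : Type*} [Preorder β] {f : α → β} {m : β} {S : Set α}
    (hS : S.Nonempty) (hm : ∀ x, m ≤ f x) (hle : ∀ x ∈ S, f x ≤ m) (hmem : ∀ x, f x ≤ m → x ∈ S) :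
    {u | ∀ x, f u ≤ f x} = S := by
  ext u
  obtain ⟨s, hs⟩ := hS
  exact ⟨fun hu => hmem u ((hu s).trans (hle s hs)), fun hu x => (hle u hu).trans (hm x)⟩

theorem le_sq_infDist {X : Type*} [PseudoMetricSpace X] {s : Set X} (hs : s.Nonempty) {x : X}
    {L : ℝ} (h : ∀ y ∈ s, L ≤ dist x y ^ 2) : L ≤ infDist x s ^ 2 :=
  (Real.sqrt_le_iff.1 <| (le_infDist hs).2 fun y hy =>
    Real.sqrt_le_iff.2 ⟨dist_nonneg, h y hy⟩).2

theorem sq_infDist_le_sq_dist {X : Type*} [PseudoMetricSpace X] {s : Set X} {x y : X}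
    (hy : y ∈ s) : infDist x s ^ 2 ≤ dist x y ^ 2 :=
  pow_le_pow_left₀ infDist_nonneg (infDist_le_dist_of_mem hy) 2

theorem sq_max_zero_sub_one_le {a t : ℝ} (ht : t ≤ 1) : max 0 (a - 1) ^ 2 ≤ (a - t) ^ 2 := by
  rcases le_total a 1 with h | h
  · rw [max_eq_left (by linarith)]
    simpa using sq_nonneg (a - t)
  · rw [max_eq_right (by linarith)]
    nlinarith

theorem sq_max_zero_abs_sub_one_le {z t : ℝ} (ht : |t| ≤ 1) :
    max 0 (|z| - 1) ^ 2 ≤ (z - t) ^ 2 :=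
  (sq_max_zero_sub_one_le ht).trans (sq_le_sq.2 (abs_abs_sub_abs_le z t))

theorem sq_sub_five_thirds_le (b : ℝ) :
    (b - 5 / 3) ^ 2 ≤ 8 + 2 * (b - 2) ^ 2 + max 0 (b - 1) ^ 2 - 26 / 3 := by
  rcases le_total b 1 with h | h
  · rw [max_eq_left (by linarith)]
    nlinarith
  · rw [max_eq_right (by linarith)]
    nlinarith

theorem dist_sq_eq_fin_three (u v : E3) :
    dist u v ^ 2 = (u 0 - v 0) ^ 2 + (u 1 - v 1) ^ 2 + (u 2 - v 2) ^ 2 := by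
  rw [EuclideanSpace.dist_eq, Real.sq_sqrt (by positivity)]
  simp [Fin.sum_univ_three, Real.dist_eq, sq_abs]

def verticalSegment (a b : ℝ) : Set E3 := {v | v 0 = a ∧ v 1 = b ∧ |v 2| ≤ 1}

theorem convexHull_pair_eq_verticalSegment (a b : ℝ) :
    convexHull ℝ {WithLp.toLp 2 ![a, b, 1], WithLp.toLp 2 ![a, b, -1]} = verticalSegment a b := by
  ext v
  rw [convexHull_pair]
  constructor
  · rintro ⟨s, t, hs, ht, hst, rfl⟩
    refine ⟨?_, ?_, abs_le.2 ⟨?_, ?_⟩⟩ <;>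
      simp only [PiLp.add_apply, PiLp.smul_apply, smul_eq_mul, Matrix.cons_val_zero,
        Matrix.cons_val_one, Matrix.cons_val_two, Matrix.head_cons, Matrix.tail_cons]
    · linear_combination a * hst
    · linear_combination b * hst
    all_goals linarith
  · rintro ⟨h0, h1, h2⟩
    rw [abs_le] at h2
    refine ⟨(1 + v 2) / 2, (1 - v 2) / 2, by linarith, by linarith, by ring, ?_⟩
    ext i
    fin_cases i <;> simp [h0, h1] <;> ring

theorem mk_mem_verticalSegment (a b : ℝ) {z : ℝ} (hz : |z| ≤ 1) :
    WithLp.toLp 2 ![a, b, z] ∈ verticalSegment a b := by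
  simp [verticalSegment, hz]

theorem le_sq_infDist_verticalSegment (a b : ℝ) (u : E3) :
    (u 0 - a) ^ 2 + (u 1 - b) ^ 2 + max 0 (|u 2| - 1) ^ 2 ≤ infDist u (verticalSegment a b) ^ 2 := by
  refine le_sq_infDist ⟨_, mk_mem_verticalSegment a b (z := 0) (by simp)⟩ fun v ⟨h0, h1, h2⟩ => ?_
  rw [dist_sq_eq_fin_three, h0, h1]
  linarith [sq_max_zero_abs_sub_one_le (z := u 2) h2]

theorem le_sq_infDist_Dcyl (u : E3) :
    max 0 (u 1 - 1) ^ 2 + max 0 (|u 2| - 1) ^ 2 ≤ infDist u Dcyl ^ 2 := by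
  refine le_sq_infDist ⟨0, by simp [Dcyl]⟩ fun v ⟨hxy, hz⟩ => ?_
  have hv1 : v 1 ≤ 1 := by nlinarith [sq_nonneg (v 0), sq_nonneg (v 1 - 1)]
  rw [dist_sq_eq_fin_three]
  nlinarith [sq_max_zero_sub_one_le (a := u 1) hv1, sq_max_zero_abs_sub_one_le (z := u 2) hz]

theorem C1_eq : C1 = verticalSegment (-2) 2 := convexHull_pair_eq_verticalSegment _ _

theorem C2_eq : C2 = verticalSegment 2 2 := convexHull_pair_eq_verticalSegment _ _

def lsqObjective (u : E3) : ℝ := infDist u C1 ^ 2 + infDist u C2 ^ 2 + infDist u Dcyl ^ 2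

theorem lsqObjective_lower_bound (u : E3) :
    26 / 3 + 2 * u 0 ^ 2 + (u 1 - 5 / 3) ^ 2 + 3 * max 0 (|u 2| - 1) ^ 2 ≤ lsqObjective u := by
  have h1 := le_sq_infDist_verticalSegment (-2) 2 u
  have h2 := le_sq_infDist_verticalSegment 2 2 u
  have hD := le_sq_infDist_Dcyl u
  have hy := sq_sub_five_thirds_le (u 1)
  rw [lsqObjective, C1_eq, C2_eq]
  nlinarith

theorem lsqObjective_le_of_mem {u : E3} (h0 : u 0 = 0) (h1 : u 1 = 5 / 3) (h2 : |u 2| ≤ 1) :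
    lsqObjective u ≤ 26 / 3 := by
  have hD : WithLp.toLp 2 ![0, 1, u 2] ∈ Dcyl := by simp [Dcyl, h2]
  have e1 := sq_infDist_le_sq_dist (x := u) (mk_mem_verticalSegment (-2) 2 h2)
  have e2 := sq_infDist_le_sq_dist (x := u) (mk_mem_verticalSegment 2 2 h2)
  have e3 := sq_infDist_le_sq_dist (x := u) hD
  simp only [dist_sq_eq_fin_three, Matrix.cons_val_zero, Matrix.cons_val_one,
    Matrix.cons_val_two, Matrix.head_cons, Matrix.tail_cons, h0, h1, sub_self] at e1 e2 e3
  rw [lsqObjective, C1_eq, C2_eq]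
  linarith

theorem coords_of_lsqObjective_le {u : E3} (hu : lsqObjective u ≤ 26 / 3) :
    u 0 = 0 ∧ u 1 = 5 / 3 ∧ |u 2| ≤ 1 := by
  have hlow := lsqObjective_lower_bound u
  have hx : u 0 = 0 := by nlinarith [sq_nonneg (u 1 - 5 / 3), sq_nonneg (max 0 (|u 2| - 1))]
  have hy : u 1 = 5 / 3 := by nlinarith [sq_nonneg (u 0), sq_nonneg (max 0 (|u 2| - 1))]
  have hz : max 0 (|u 2| - 1) = 0 := by nlinarith [sq_nonneg (u 0), sq_nonneg (u 1 - 5 / 3)]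
  exact ⟨hx, hy, by linarith [le_max_right 0 (|u 2| - 1)]⟩

theorem stmt15 :
    {u : E3 | ∀ x : E3,
        Metric.infDist u C1 ^ 2 + Metric.infDist u C2 ^ 2 + Metric.infDist u Dcyl ^ 2 ≤
        Metric.infDist x C1 ^ 2 + Metric.infDist x C2 ^ 2 + Metric.infDist x Dcyl ^ 2} =
      {u : E3 | u 0 = 0 ∧ u 1 = 5 / 3 ∧ |u 2| ≤ 1} := by
  refine setOf_forall_le_eq_of_min (f := lsqObjective) (m := 26 / 3)
    ⟨WithLp.toLp 2 ![0, 5 / 3, 0], by simp⟩ (fun x => ?_)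
    (fun u ⟨h0, h1, h2⟩ => lsqObjective_le_of_mem h0 h1 h2) (fun u => coords_of_lsqObjective_le)
  nlinarith [lsqObjective_lower_bound x, sq_nonneg (x 0), sq_nonneg (x 1 - 5 / 3),
    sq_nonneg (max 0 (|x 2| - 1))]
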